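/- Fix weighting functions w⁻, w⁺ that are continuously differentiable on [0,1] with strictly positive derivatives. Let A₁, …, A_K be bounded random variables and let a_k⁻ ≤ a_k⁺ be real numbers with [a_k⁻, a_k⁺] contained in the open interval (essinf A_k, esssup A_k) for each k. Let 𝒱 be a set of value functions v for which the maps x ↦ E_{w⁻w⁺}[v(A_k − x)] and x ↦ E_{w⁻w⁺}[v(ξ − x)] are continuous, and define 𝒱_ce := { v ∈ 𝒱 : E_{w⁻w⁺}[v(A_k − a_k⁺)] ≤ 0 and E_{w⁻w⁺}[v(A_k − a_k⁻)] ≥ 0 for all k }. Then for every bounded random variable ξ, sup { ρ_{(v,w⁻,w⁺)}(ξ) : v ∈ 𝒱 with a_k⁻ ≤ ρ_{(v,w⁻,w⁺)}(A_k) ≤ a_k⁺ for all k } = inf { x ∈ ℝ : E_{w⁻w⁺}[v(ξ − x)] ≤ 0 for all v ∈ 𝒱_ce }, as elements of the extended real line. -/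

import Mathlib

open MeasureTheory Set

noncomputable section

/-- A value function: strictly increasing `v : ℝ → ℝ` with `v 0 = 0`. -/
def IsValueFun (v : ℝ → ℝ) : Prop := StrictMono v ∧ v 0 = 0

/-- A weighting function: a strictly increasing `w : [0,1] → [0,1]`
with `w 0 = 0` and `w 1 = 1`. -/
def IsWeightFun (w : ℝ → ℝ) : Prop :=
  StrictMonoOn w (Icc 0 1) ∧ MapsTo w (Icc 0 1) (Icc 0 1) ∧ w 0 = 0 ∧ w 1 = 1

/-- The CPT distorted expectation
`E_{w⁻w⁺}[v(ζ)] = ∫₀^∞ w⁺(ℙ(v(ζ) ≥ t)) dt − ∫₀^∞ w⁻(ℙ(v(ζ) ≤ −t)) dt`. -/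
def cptE {Ω : Type*} [MeasurableSpace Ω] (P : Measure Ω)
    (v wm wp : ℝ → ℝ) (ζ : Ω → ℝ) : ℝ :=
  (∫ t in Ioi (0:ℝ), wp (P {ω | t ≤ v (ζ ω)}).toReal)
    - ∫ t in Ioi (0:ℝ), wm (P {ω | v (ζ ω) ≤ -t}).toReal

/-- Both integrals defining the CPT distorted expectation are finite. -/
def CptWellDef {Ω : Type*} [MeasurableSpace Ω] (P : Measure Ω)
    (v wm wp : ℝ → ℝ) (ζ : Ω → ℝ) : Prop :=
  IntegrableOn (fun t => wp (P {ω | t ≤ v (ζ ω)}).toReal) (Ioi 0) ∧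
    IntegrableOn (fun t => wm (P {ω | v (ζ ω) ≤ -t}).toReal) (Ioi 0)

/-- The generalized shortfall risk measure (GSR-CPT):
`ρ_{(v,w⁻,w⁺)}(ξ) = inf { x : E_{w⁻w⁺}[v(ξ − x)] ≤ 0 }`, with `inf ∅ = +∞`. -/
def gsr {Ω : Type*} [MeasurableSpace Ω] (P : Measure Ω)
    (v wm wp : ℝ → ℝ) (ξ : Ω → ℝ) : EReal :=
  sInf ((fun x : ℝ => (x : EReal)) ''
    {x : ℝ | cptE P v wm wp (fun ω => ξ ω - x) ≤ 0})

/-- A bounded random variable. -/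
def IsBddRV {Ω : Type*} [MeasurableSpace Ω] (ξ : Ω → ℝ) : Prop :=
  Measurable ξ ∧ ∃ M : ℝ, ∀ ω, |ξ ω| ≤ M

/-- A weighting function which is continuously differentiable on `[0,1]`
with strictly positive derivative. -/
def SmoothWeight (w : ℝ → ℝ) : Prop :=
  IsWeightFun w ∧ ContDiffOn ℝ 1 w (Icc 0 1) ∧
    ∀ p ∈ Icc (0:ℝ) 1, 0 < derivWithin w (Icc 0 1) p

/-!
For a bounded `ζ`, the map `x ↦ E_{w⁻w⁺}[v(ζ - x)]` is antitone, so (being continuous) its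
nonpositivity set is a closed up-set `[ρ_v(ζ), ∞)`. Hence `ρ_v(A_k) ≤ a_k⁺` iff
`E[v(A_k - a_k⁺)] ≤ 0`, and, since the map is *strictly* decreasing to the left of any
`a > essinf A_k`, `a_k⁻ ≤ ρ_v(A_k)` iff `E[v(A_k - a_k⁻)] ≥ 0`; so the two sets of value functions
coincide. Strictness comes from the layer-cake formula: equal distorted loss parts force
`(v(A - c))⁻ = (v(A - x))⁻` almost surely, i.e. `A ≥ c` almost surely. Finally the supremum of
the `ρ_v(ξ)` is the infimum of their common real upper bounds, which are exactly the `x` with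
`E[v(ξ - x)] ≤ 0` for all `v ∈ 𝒱_ce`.
-/

open Filter Topology

namespace EReal

theorem sInf_coe_image_le_coe_iff {S : Set ℝ} (hS : IsClosed S) (hup : IsUpperSet S) {x : ℝ} :
    sInf ((fun y : ℝ => (y : EReal)) '' S) ≤ x ↔ x ∈ S := by
  refine ⟨fun h => ?_, fun hx => sInf_le ⟨x, hx, rfl⟩⟩
  have hlim : Tendsto (fun ε : ℝ => x + ε) (𝓝[>] 0) (𝓝 x) := by
    simpa using (tendsto_const_nhds.add tendsto_id).mono_left (nhdsWithin_le_nhds (a := (0 : ℝ)))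
  refine hS.mem_of_tendsto hlim (eventually_nhdsWithin_of_forall fun ε (hε : 0 < ε) => ?_)
  have hlt : sInf ((fun y : ℝ => (y : EReal)) '' S) < ((x + ε : ℝ) : EReal) :=
    h.trans_lt (EReal.coe_lt_coe_iff.2 (lt_add_of_pos_right x hε))
  obtain ⟨_, ⟨y, hy, rfl⟩, hyx⟩ := sInf_lt_iff.1 hlt
  exact hup (EReal.coe_lt_coe_iff.1 hyx).le hy

theorem coe_le_sInf_coe_image_setOf_nonpos_iff {φ : ℝ → ℝ} {x : ℝ} (hφ : ContinuousAt φ x)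
    (hlt : ∀ y < x, φ x < φ y) :
    (x : EReal) ≤ sInf ((fun y : ℝ => (y : EReal)) '' {y | φ y ≤ 0}) ↔ 0 ≤ φ x := by
  constructor
  · intro h
    by_contra! hneg
    obtain ⟨y, hφy, hyx⟩ :=
      ((hφ.eventually (gt_mem_nhds hneg)).filter_mono nhdsWithin_le_nhds).and
        (self_mem_nhdsWithin (s := Iio x)) |>.exists
    exact (h.trans (sInf_le ⟨y, hφy.le, rfl⟩)).not_gt (EReal.coe_lt_coe_iff.2 hyx)
  · intro hφx
    refine le_sInf ?_
    rintro _ ⟨y, hy, rfl⟩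
    by_contra! hyx
    exact (hlt y (EReal.coe_lt_coe_iff.1 hyx)).not_ge (hy.trans hφx)

theorem biSup_eq_sInf_coe_image {ι : Type*} (S : Set ι) (f : ι → EReal) :
    ⨆ i ∈ S, f i = sInf ((fun x : ℝ => (x : EReal)) '' {x : ℝ | ∀ i ∈ S, f i ≤ x}) :=
  le_antisymm
    (iSup₂_le fun i hi => le_sInf <| by rintro _ ⟨x, hx, rfl⟩; exact hx i hi)
    (EReal.le_of_forall_lt_iff_le.1 fun z hz =>
      sInf_le ⟨z, fun i hi => (le_iSup₂ (f := fun i _ => f i) i hi).trans hz.le, rfl⟩)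

end EReal

section DistortedTail

variable {Ω : Type*} [MeasurableSpace Ω] {P : Measure Ω} [IsProbabilityMeasure P] {w : ℝ → ℝ}

def distortedTail (P : Measure Ω) (w : ℝ → ℝ) (f : Ω → ℝ) : ℝ :=
  ∫ t in Ioi (0 : ℝ), w (P {ω | t ≤ f ω}).toReal

theorem toReal_measure_mem_Icc (s : Set Ω) : (P s).toReal ∈ Icc (0 : ℝ) 1 :=
  ⟨ENNReal.toReal_nonneg, ENNReal.toReal_le_of_le_ofReal zero_le_one (by simp [prob_le_one])⟩

namespace IsWeightFun

theorem comp_measure_mono (hw : IsWeightFun w) {s t : Set Ω} (h : s ⊆ t) :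
    w (P s).toReal ≤ w (P t).toReal :=
  hw.1.monotoneOn (toReal_measure_mem_Icc s) (toReal_measure_mem_Icc t)
    (ENNReal.toReal_mono (measure_ne_top P t) (measure_mono h))

theorem comp_measure_mem_Icc (hw : IsWeightFun w) (s : Set Ω) : w (P s).toReal ∈ Icc (0 : ℝ) 1 :=
  hw.2.1 (toReal_measure_mem_Icc s)

theorem integrableOn_comp_measure_tail (hw : IsWeightFun w) {f : Ω → ℝ} {B : ℝ}
    (hB : ∀ ω, f ω ≤ B) :
    IntegrableOn (fun t => w (P {ω | t ≤ f ω}).toReal) (Ioi 0) := by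
  have hanti : Antitone fun t => w (P {ω | t ≤ f ω}).toReal := fun s t hst =>
    hw.comp_measure_mono fun ω (h : t ≤ f ω) => hst.trans h
  rw [← Ioc_union_Ioi_eq_Ioi (le_max_right B 0)]
  refine IntegrableOn.union ?_ ?_
  · refine IntegrableOn.of_bound measure_Ioc_lt_top hanti.measurable.aestronglyMeasurable 1
      (Eventually.of_forall fun t => ?_)
    have h := hw.comp_measure_mem_Icc (P := P) {ω | t ≤ f ω}
    rw [Real.norm_eq_abs, abs_of_nonneg h.1]
    exact h.2
  · refine (integrableOn_congr_fun (fun t (ht : max B 0 < t) => ?_) measurableSet_Ioi).2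
      integrableOn_zero
    have hempty : {ω | t ≤ f ω} = ∅ :=
      eq_empty_of_forall_notMem fun ω (h : t ≤ f ω) =>
        ((le_max_left B 0).trans_lt ht).not_ge (h.trans (hB ω))
    simp [hempty, hw.2.2.1]

end IsWeightFun

theorem distortedTail_mono (hw : IsWeightFun w) {f g : Ω → ℝ} {B : ℝ} (hfg : ∀ ω, f ω ≤ g ω)
    (hB : ∀ ω, g ω ≤ B) :
    distortedTail P w f ≤ distortedTail P w g :=
  setIntegral_mono_on (hw.integrableOn_comp_measure_tail fun ω => (hfg ω).trans (hB ω))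
    (hw.integrableOn_comp_measure_tail hB) measurableSet_Ioi
    fun _ _ => hw.comp_measure_mono fun ω h => h.trans (hfg ω)

theorem integrable_max_zero_of_le {f : Ω → ℝ} (hf : Measurable f) {B : ℝ} (hB : ∀ ω, f ω ≤ B) :
    Integrable (fun ω => max (f ω) 0) P :=
  Integrable.of_bound (hf.max measurable_const).aestronglyMeasurable (max B 0)
    (Eventually.of_forall fun ω => by
      rw [Real.norm_eq_abs, abs_of_nonneg (le_max_right _ _)]
      exact max_le_max (hB ω) le_rfl)

theorem integral_max_zero_eq_setIntegral_measure_tail {μ : Measure Ω} {f : Ω → ℝ}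
    (hint : Integrable (fun ω => max (f ω) 0) μ) :
    ∫ ω, max (f ω) 0 ∂μ = ∫ t in Ioi (0 : ℝ), (μ {ω | t ≤ f ω}).toReal := by
  rw [hint.integral_eq_integral_meas_le (Eventually.of_forall fun ω => le_max_right _ _)]
  refine setIntegral_congr_fun measurableSet_Ioi fun t (ht : 0 < t) => ?_
  have hset : {ω | t ≤ max (f ω) 0} = {ω | t ≤ f ω} := by
    ext ω
    simp [ht.not_ge]
  simp only [measureReal_def, hset]

theorem ae_max_zero_eq_of_distortedTail_eq (hw : IsWeightFun w) {f g : Ω → ℝ}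
    (hf : Measurable f) (hg : Measurable g) {B : ℝ} (hfg : ∀ ω, f ω ≤ g ω) (hB : ∀ ω, g ω ≤ B)
    (heq : distortedTail P w f = distortedTail P w g) :
    ∀ᵐ ω ∂P, max (f ω) 0 = max (g ω) 0 := by
  have hfB : ∀ ω, f ω ≤ B := fun ω => (hfg ω).trans (hB ω)
  have hw_ae : ∀ᵐ t ∂volume.restrict (Ioi (0 : ℝ)),
      w (P {ω | t ≤ f ω}).toReal = w (P {ω | t ≤ g ω}).toReal :=
    (integral_eq_iff_of_ae_le (hw.integrableOn_comp_measure_tail hfB)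
      (hw.integrableOn_comp_measure_tail hB)
      (Eventually.of_forall fun _ => hw.comp_measure_mono fun ω h => h.trans (hfg ω))).1 heq
  have htail_ae : (fun t => (P {ω | t ≤ f ω}).toReal)
      =ᵐ[volume.restrict (Ioi (0 : ℝ))] fun t => (P {ω | t ≤ g ω}).toReal :=
    hw_ae.mono fun _ ht => hw.1.injOn (toReal_measure_mem_Icc _) (toReal_measure_mem_Icc _) ht
  have hfint := integrable_max_zero_of_le (P := P) hf hfB
  have hgint := integrable_max_zero_of_le (P := P) hg hB
  refine (integral_eq_iff_of_ae_le hfint hgint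
    (Eventually.of_forall fun ω => max_le_max (hfg ω) le_rfl)).1 ?_
  rw [integral_max_zero_eq_setIntegral_measure_tail hfint,
    integral_max_zero_eq_setIntegral_measure_tail hgint]
  exact integral_congr_ae htail_ae

end DistortedTail

section CptE

variable {Ω : Type*} [MeasurableSpace Ω] {P : Measure Ω} [IsProbabilityMeasure P]
  {v wm wp : ℝ → ℝ}

theorem cptE_eq_distortedTail_sub (P : Measure Ω) (v wm wp : ℝ → ℝ) (ζ : Ω → ℝ) :
    cptE P v wm wp ζ =
      distortedTail P wp (fun ω => v (ζ ω)) - distortedTail P wm (fun ω => -v (ζ ω)) := by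
  simp only [cptE, distortedTail, le_neg]

theorem cptE_mono (hv : Monotone v) (hwm : IsWeightFun wm) (hwp : IsWeightFun wp)
    {ζ₁ ζ₂ : Ω → ℝ} {m M : ℝ} (hm : ∀ ω, m ≤ ζ₁ ω) (hM : ∀ ω, ζ₂ ω ≤ M)
    (h : ∀ ω, ζ₁ ω ≤ ζ₂ ω) :
    cptE P v wm wp ζ₁ ≤ cptE P v wm wp ζ₂ := by
  rw [cptE_eq_distortedTail_sub, cptE_eq_distortedTail_sub]
  exact sub_le_sub
    (distortedTail_mono hwp (fun ω => hv (h ω)) fun ω => hv (hM ω))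
    (distortedTail_mono hwm (fun ω => neg_le_neg (hv (h ω))) fun ω => neg_le_neg (hv (hm ω)))

theorem cptE_sub_lt_cptE_sub (hv : IsValueFun v) (hwm : IsWeightFun wm) (hwp : IsWeightFun wp)
    {A : Ω → ℝ} (hA : Measurable A) {M : ℝ} (hAM : ∀ ω, |A ω| ≤ M) {x c : ℝ} (hxc : x < c)
    (hc : essInf A P < c) :
    cptE P v wm wp (fun ω => A ω - c) < cptE P v wm wp (fun ω => A ω - x) := by
  have hlo : ∀ ω, -M ≤ A ω := fun ω => (abs_le.1 (hAM ω)).1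
  have hhi : ∀ ω, A ω ≤ M := fun ω => (abs_le.1 (hAM ω)).2
  have hshift : ∀ ω, v (A ω - c) < v (A ω - x) := fun ω => hv.1 (by linarith)
  have hgain := distortedTail_mono (P := P) hwp (fun ω => (hshift ω).le)
    fun ω => hv.1.monotone (sub_le_sub_right (hhi ω) x)
  have hloss := distortedTail_mono (P := P) hwm (fun ω => neg_le_neg (hshift ω).le)
    fun ω => neg_le_neg (hv.1.monotone (sub_le_sub_right (hlo ω) c))
  rw [cptE_eq_distortedTail_sub, cptE_eq_distortedTail_sub]
  refine lt_of_le_of_ne (sub_le_sub hgain hloss) fun heq => ?_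
  have hvm : Measurable v := hv.1.monotone.measurable
  have hloss_eq : distortedTail P wm (fun ω => -v (A ω - x)) =
      distortedTail P wm (fun ω => -v (A ω - c)) := by linarith
  have hloss_ae : ∀ᵐ ω ∂P, max (-v (A ω - x)) 0 = max (-v (A ω - c)) 0 :=
    ae_max_zero_eq_of_distortedTail_eq hwm
      (hvm.comp (hA.sub_const x)).neg (hvm.comp (hA.sub_const c)).neg
      (fun ω => neg_le_neg (hshift ω).le)
      (fun ω => neg_le_neg (hv.1.monotone (sub_le_sub_right (hlo ω) c))) hloss_eq
  have hAc : ∀ᵐ ω ∂P, c ≤ A ω := hloss_ae.mono fun ω hω => by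
    by_contra! hlt
    have hpos : 0 < -v (A ω - c) := by
      rw [neg_pos, ← hv.2]
      exact hv.1 (by linarith)
    rw [max_eq_left hpos.le] at hω
    exact (max_lt (neg_lt_neg (hshift ω)) hpos).ne hω
  have : (ae P).NeBot := ae_neBot.2 (IsProbabilityMeasure.ne_zero P)
  exact hc.not_ge (le_essInf_of_ae_le c hAc (isCoboundedUnder_ge_of_le _ hhi))

theorem gsr_le_coe_iff (hv : Monotone v) (hwm : IsWeightFun wm) (hwp : IsWeightFun wp)
    {ζ : Ω → ℝ} {M : ℝ} (hζ : ∀ ω, |ζ ω| ≤ M)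
    (hcont : Continuous fun x : ℝ => cptE P v wm wp (fun ω => ζ ω - x)) (x : ℝ) :
    gsr P v wm wp ζ ≤ x ↔ cptE P v wm wp (fun ω => ζ ω - x) ≤ 0 :=
  EReal.sInf_coe_image_le_coe_iff (isClosed_le hcont continuous_const)
    fun y z hyz hy => le_trans (cptE_mono hv hwm hwp
      (fun ω => sub_le_sub_right (abs_le.1 (hζ ω)).1 z)
      (fun ω => sub_le_sub_right (abs_le.1 (hζ ω)).2 y)
      fun ω => sub_le_sub_left hyz (ζ ω)) hy

theorem coe_le_gsr_iff (hv : IsValueFun v) (hwm : IsWeightFun wm) (hwp : IsWeightFun wp)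
    {A : Ω → ℝ} (hA : Measurable A) {M : ℝ} (hAM : ∀ ω, |A ω| ≤ M)
    (hcont : Continuous fun x : ℝ => cptE P v wm wp (fun ω => A ω - x)) {x : ℝ}
    (hx : essInf A P < x) :
    (x : EReal) ≤ gsr P v wm wp A ↔ 0 ≤ cptE P v wm wp (fun ω => A ω - x) :=
  EReal.coe_le_sInf_coe_image_setOf_nonpos_iff hcont.continuousAt
    fun _ hy => cptE_sub_lt_cptE_sub hv hwm hwp hA hAM hy hx

end CptE

theorem ce_robust_representation_general {Ω : Type*} [MeasurableSpace Ω] (P : Measure Ω)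
    [IsProbabilityMeasure P]
    (wm wp : ℝ → ℝ) (hwm : SmoothWeight wm) (hwp : SmoothWeight wp)
    (K : ℕ) (A : Fin K → Ω → ℝ) (hA : ∀ k, IsBddRV (A k))
    (am ap : Fin K → ℝ)
    (h_in : ∀ k, essInf (A k) P < am k ∧ ap k < essSup (A k) P)
    (ξ : Ω → ℝ) (hξ : IsBddRV ξ)
    (V : Set (ℝ → ℝ)) (hV : ∀ v ∈ V, IsValueFun v)
    (hcontA : ∀ v ∈ V, ∀ k, Continuous fun x : ℝ =>
      cptE P v wm wp (fun ω => A k ω - x))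
    (hcontξ : ∀ v ∈ V, Continuous fun x : ℝ =>
      cptE P v wm wp (fun ω => ξ ω - x)) :
    (⨆ v ∈ {v ∈ V | ∀ k, (am k : EReal) ≤ gsr P v wm wp (A k) ∧
          gsr P v wm wp (A k) ≤ (ap k : EReal)},
        gsr P v wm wp ξ)
      = sInf ((fun x : ℝ => (x : EReal)) ''
          {x : ℝ | ∀ v ∈ {v ∈ V |
              ∀ k, cptE P v wm wp (fun ω => A k ω - ap k) ≤ 0 ∧
                0 ≤ cptE P v wm wp (fun ω => A k ω - am k)},
            cptE P v wm wp (fun ω => ξ ω - x) ≤ 0}) := by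
  obtain ⟨-, Mξ, hMξ⟩ := hξ
  have hconsistent : {v ∈ V | ∀ k, (am k : EReal) ≤ gsr P v wm wp (A k) ∧
        gsr P v wm wp (A k) ≤ (ap k : EReal)} =
      {v ∈ V | ∀ k, cptE P v wm wp (fun ω => A k ω - ap k) ≤ 0 ∧
        0 ≤ cptE P v wm wp (fun ω => A k ω - am k)} := by
    refine sep_ext_iff.2 fun v hv => forall_congr' fun k => ?_
    obtain ⟨hAm, M, hM⟩ := hA k
    rw [coe_le_gsr_iff (hV v hv) hwm.1 hwp.1 hAm hM (hcontA v hv k) (h_in k).1,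
      gsr_le_coe_iff (hV v hv).1.monotone hwm.1 hwp.1 hM (hcontA v hv k), and_comm]
  rw [hconsistent, EReal.biSup_eq_sInf_coe_image]
  congr 2
  ext x
  exact forall₂_congr fun v hv =>
    gsr_le_coe_iff (hV v hv.1).1.monotone hwm.1 hwp.1 hMξ (hcontξ v hv.1) x

/-- the worst-case GSR-CPT over value functions in `𝒱`
consistent with the certainty-equivalent bounds equals the robust shortfall
risk computed with the ambiguity set `𝒱_ce`. -/
theorem ce_robust_representation {Ω : Type*} [MeasurableSpace Ω] (P : Measure Ω)
    [IsProbabilityMeasure P]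
    (wm wp : ℝ → ℝ) (hwm : SmoothWeight wm) (hwp : SmoothWeight wp)
    (K : ℕ) (A : Fin K → Ω → ℝ) (hA : ∀ k, IsBddRV (A k))
    (am ap : Fin K → ℝ) (h_le : ∀ k, am k ≤ ap k)
    (h_in : ∀ k, essInf (A k) P < am k ∧ ap k < essSup (A k) P)
    (ξ : Ω → ℝ) (hξ : IsBddRV ξ)
    (V : Set (ℝ → ℝ)) (hV : ∀ v ∈ V, IsValueFun v)
    (hcontA : ∀ v ∈ V, ∀ k, Continuous fun x : ℝ =>
      cptE P v wm wp (fun ω => A k ω - x))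
    (hcontξ : ∀ v ∈ V, Continuous fun x : ℝ =>
      cptE P v wm wp (fun ω => ξ ω - x)) :
    (⨆ v ∈ {v ∈ V | ∀ k, (am k : EReal) ≤ gsr P v wm wp (A k) ∧
          gsr P v wm wp (A k) ≤ (ap k : EReal)},
        gsr P v wm wp ξ)
      = sInf ((fun x : ℝ => (x : EReal)) ''
          {x : ℝ | ∀ v ∈ {v ∈ V |
              ∀ k, cptE P v wm wp (fun ω => A k ω - ap k) ≤ 0 ∧
                0 ≤ cptE P v wm wp (fun ω => A k ω - am k)},
            cptE P v wm wp (fun ω => ξ ω - x) ≤ 0}) :=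
  ce_robust_representation_general P wm wp hwm hwp K A hA am ap h_in ξ hξ V hV hcontA hcontξ
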